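/- (Bizley's first identity) For all natural numbers a, b, d, p, we have ∑_{k=0}^{a} C(a,k)·C(b, k−d)·C(p+k, a+b) = C(p, a−d)·C(p+d, b+d). -/

import Mathlib

/-!
Expand `C (p + k) (a + b)` by Vandermonde's identity as `∑ⱼ C k j * C p (a + b - j)`, swap the
sums and use the trinomial revision `C a k * C k j = C a j * C (a - j) (k - j)`; the remaining sum
over `k` is again Vandermonde and equals `C (a + b - j) (a - d)`. A second trinomial revision turns
`C p (a + b - j) * C (a + b - j) (a - d)` into `C p (a - d) * C (p + d - a) (b + d - j)`, and a
last Vandermonde sums `∑ⱼ C a j * C (p + d - a) (b + d - j)` to `C (p + d) (b + d)`; when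
`p + d < a` the common factor `C p (a - d)` is zero.
-/

/-- Binomial coefficient for integers: `C x y` is the usual binomial coefficient
when `0 ≤ y ≤ x`, and `0` otherwise. -/
def C (x y : ℤ) : ℤ := if 0 ≤ y ∧ y ≤ x then (x.toNat.choose y.toNat : ℤ) else 0

open Finset

lemma C_of_neg {x y : ℤ} (h : y < 0) : C x y = 0 := by
  unfold C; rw [if_neg]; omega

lemma C_of_lt {x y : ℤ} (h : x < y) : C x y = 0 := by
  unfold C; rw [if_neg]; omega

lemma C_natCast (x y : ℕ) : C x y = x.choose y := by
  unfold C
  split_ifs with h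
  · simp
  · rw [Nat.choose_eq_zero_of_lt (by omega), Nat.cast_zero]

lemma C_symm {x : ℤ} (hx : 0 ≤ x) (y : ℤ) : C x y = C x (x - y) := by
  unfold C
  split_ifs with h1 h2 h2 <;> try omega
  rw [show (x - y).toNat = x.toNat - y.toNat by omega, Nat.choose_symm (by omega)]

lemma C_mul_C (n m r : ℤ) : C n m * C m r = C n r * C (n - r) (m - r) := by
  unfold C
  split_ifs <;> try omega
  rw [show (n - r).toNat = n.toNat - r.toNat by omega,
    show (m - r).toNat = m.toNat - r.toNat by omega, ← Nat.cast_mul, ← Nat.cast_mul,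
    Nat.choose_mul (by omega)]

lemma C_add_eq_sum_range (x y n : ℕ) :
    C (x + y) n = ∑ i ∈ range (n + 1), C x i * C y ((n : ℤ) - i) := by
  rw [← Nat.cast_add, C_natCast, Nat.add_choose_eq,
    Nat.sum_antidiagonal_eq_sum_range_succ_mk, Nat.cast_sum]
  refine sum_congr rfl fun i hi => ?_
  rw [← Nat.cast_sub (Nat.le_of_lt_succ (mem_range.1 hi)), C_natCast, C_natCast, Nat.cast_mul]

/-- Vandermonde's identity; any range covering the support `[0, x]` of `C x` will do. -/
lemma C_vandermonde (x y N : ℕ) (hN : x ≤ N) (n : ℤ) :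
    ∑ i ∈ range (N + 1), C x i * C y (n - i) = C (x + y) n := by
  obtain hn | ⟨n, rfl⟩ : n < 0 ∨ ∃ m : ℕ, n = m := by
    rcases lt_or_ge n 0 with hn | hn
    · exact .inl hn
    · exact .inr (Int.eq_ofNat_of_zero_le hn)
  · rw [C_of_neg hn]
    exact sum_eq_zero fun i _ => by rw [C_of_neg (y := n - i) (by omega), mul_zero]
  rw [C_add_eq_sum_range]
  rcases le_total n N with h | h
  · refine (sum_subset (range_subset_range.2 (by omega)) fun i _ hi => ?_).symm
    rw [C_of_neg (y := (n : ℤ) - i) (by simp only [mem_range] at hi; omega), mul_zero]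
  · refine sum_subset (range_subset_range.2 (by omega)) fun i _ hi => ?_
    rw [C_of_lt (by simp only [mem_range] at hi; omega), zero_mul]

lemma C_add_eq_sum_range_of_le {k a : ℕ} (hk : k ≤ a) (p : ℕ) (n : ℤ) :
    C ((p : ℤ) + k) n = ∑ j ∈ range (a + 1), C k j * C p (n - j) := by
  rw [add_comm, C_vandermonde k p a hk]

/-- Vandermonde's identity after reflecting `k ↦ a - k` and using `C (a - j) (k - j) = C (a - j) (a - k)`. -/
lemma sum_C_sub_mul_C_sub {a j : ℕ} (hj : j ≤ a) (b d : ℕ) :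
    ∑ k ∈ range (a + 1), C ((a : ℤ) - j) ((k : ℤ) - j) * C b ((k : ℤ) - d)
      = C ((a : ℤ) + b - j) ((a : ℤ) - d) := by
  rw [show (a : ℤ) + b - j = ((a - j : ℕ) : ℤ) + b by omega,
    ← C_vandermonde (a - j) b a (by omega), ← sum_range_reflect]
  refine sum_congr rfl fun k hk => ?_
  have hk : k ≤ a := Nat.le_of_lt_succ (mem_range.1 hk)
  rw [C_symm (by omega), show ((a - j : ℕ) : ℤ) = (a : ℤ) - j by omega]
  congr 2 <;> omega

lemma sum_C_mul_C_mul_C_add (a b d p : ℕ) :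
    ∑ k ∈ range (a + 1), C a k * C b ((k : ℤ) - d) * C ((p : ℤ) + k) ((a : ℤ) + b)
      = ∑ j ∈ range (a + 1), C a j * C p ((a : ℤ) + b - j) * C ((a : ℤ) + b - j) ((a : ℤ) - d) := by
  calc _ = ∑ k ∈ range (a + 1), ∑ j ∈ range (a + 1),
          C a j * C p ((a : ℤ) + b - j) * (C ((a : ℤ) - j) ((k : ℤ) - j) * C b ((k : ℤ) - d)) := by
        refine sum_congr rfl fun k hk => ?_
        rw [C_add_eq_sum_range_of_le (Nat.le_of_lt_succ (mem_range.1 hk)), mul_sum]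
        refine sum_congr rfl fun j _ => ?_
        linear_combination (C b ((k : ℤ) - d) * C p ((a : ℤ) + b - j)) * C_mul_C a k j
    _ = _ := by
        rw [sum_comm]
        refine sum_congr rfl fun j hj => ?_
        rw [← mul_sum, sum_C_sub_mul_C_sub (Nat.le_of_lt_succ (mem_range.1 hj))]

theorem stmt_18 (a b d p : ℕ) :
    ∑ k ∈ Finset.range (a + 1), C a k * C b ((k : ℤ) - d) * C ((p : ℤ) + k) ((a : ℤ) + b) = C p ((a : ℤ) - d) * C ((p : ℤ) + d) ((b : ℤ) + d) := by
  have factor (j : ℕ) : C p ((a : ℤ) + b - j) * C ((a : ℤ) + b - j) ((a : ℤ) - d)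
      = C p ((a : ℤ) - d) * C ((p : ℤ) + d - a) ((b : ℤ) + d - j) := by
    rw [C_mul_C]; congr 2 <;> ring
  simp_rw [sum_C_mul_C_mul_C_add, mul_assoc, factor, mul_left_comm _ (C p _), ← mul_sum]
  rcases le_or_gt a (p + d) with h | h
  · rw [show (p : ℤ) + d - a = ((p + d - a : ℕ) : ℤ) by omega, C_vandermonde a _ a le_rfl]
    congr 2; omega
  · rw [C_of_lt (by omega : (p : ℤ) < a - d), zero_mul, zero_mul]
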